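/- arXiv:math/0106242 — 5 statements merged into one kernel-verified Lean document; each statement's English description precedes it below -/
import Mathlib

section
/- Let A be a graded commutative algebra over k and let Δ be an operator of degree 1 on A with Δ∘Δ = 0, with derived bracket [·,·]. Then the BV-axiom holds for all homogeneous x, y, z ∈ A if and only if the Poisson relation [x, y*z] = [x,y]*z + (-1)^{|y|(|x|+1)} y*[x,z] holds for all homogeneous x, y, z ∈ A. -/
/-- A ℤ-graded commutative algebra over a field `k`: a `k`-vector space `A`
with a direct sum decomposition into subspaces `grading i`, together with an
associative bilinear product that is graded commutative on homogeneous
elements (with the Koszul sign rule). -/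
structure GradedCommAlgebra (k : Type) [Field k] (A : Type) [AddCommGroup A] [Module k A] where
  grading : ℤ → Submodule k A
  isInternal : DirectSum.IsInternal grading
  mul : A →ₗ[k] A →ₗ[k] A
  mul_assoc : ∀ x y z : A, mul (mul x y) z = mul x (mul y z)
  mul_mem : ∀ (i j : ℤ) (x y : A), x ∈ grading i → y ∈ grading j → mul x y ∈ grading (i + j)
  mul_comm : ∀ (i j : ℤ) (x y : A), x ∈ grading i → y ∈ grading j →
    mul x y = ((-1 : k) ^ (i * j)) • mul y x

/-- A linear operator `Δ` on `A` has degree `d` if it maps `grading i` into `grading (i + d)`. -/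
def GradedCommAlgebra.HasDegree {k : Type} [Field k] {A : Type} [AddCommGroup A] [Module k A]
    (G : GradedCommAlgebra k A) (Δ : A →ₗ[k] A) (d : ℤ) : Prop :=
  ∀ (i : ℤ) (x : A), x ∈ G.grading i → Δ x ∈ G.grading (i + d)

/-- The derived bracket of an operator `Δ`, on a homogeneous first argument `x`
of degree `i`: `[x,y] = (-1)^{|x|} Δ(x*y) − (-1)^{|x|} Δ(x)*y − x*Δ(y)`. -/
def GradedCommAlgebra.derivedBracket {k : Type} [Field k] {A : Type} [AddCommGroup A]
    [Module k A] (G : GradedCommAlgebra k A) (Δ : A →ₗ[k] A) (i : ℤ) (x y : A) : A :=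
  ((-1 : k) ^ i) • Δ (G.mul x y) - ((-1 : k) ^ i) • G.mul (Δ x) y - G.mul x (Δ y)

/-- The BV-axiom for an operator `Δ`, on homogeneous elements `x, y, z` of
degrees `i, j, l`. -/
def GradedCommAlgebra.BVAxiom {k : Type} [Field k] {A : Type} [AddCommGroup A] [Module k A]
    (G : GradedCommAlgebra k A) (Δ : A →ₗ[k] A) : Prop :=
  ∀ (i j l : ℤ) (x y z : A), x ∈ G.grading i → y ∈ G.grading j → z ∈ G.grading l →
    Δ (G.mul (G.mul x y) z) =
      G.mul (Δ (G.mul x y)) z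
        + ((-1 : k) ^ i) • G.mul x (Δ (G.mul y z))
        + ((-1 : k) ^ ((i + 1) * j)) • G.mul y (Δ (G.mul x z))
        - G.mul (G.mul (Δ x) y) z
        - ((-1 : k) ^ i) • G.mul (G.mul x (Δ y)) z
        - ((-1 : k) ^ (i + j)) • G.mul (G.mul x y) (Δ z)

/-- for a degree-1 operator `Δ` with `Δ ∘ Δ = 0`, the BV-axiom holds on
homogeneous elements iff the derived bracket satisfies the Poisson relation
`[x, y*z] = [x,y]*z + (-1)^{|y|(|x|+1)} y*[x,z]` on homogeneous elements. -/
theorem bvAxiom_iff_poisson {k : Type} [Field k] [CharZero k]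
    {A : Type} [AddCommGroup A] [Module k A]
    (G : GradedCommAlgebra k A) (Δ : A →ₗ[k] A)
    (hΔ : G.HasDegree Δ 1) (hΔ2 : ∀ x : A, Δ (Δ x) = 0) :
    G.BVAxiom Δ ↔
      ∀ (i j l : ℤ) (x y z : A), x ∈ G.grading i → y ∈ G.grading j → z ∈ G.grading l →
        G.derivedBracket Δ i x (G.mul y z) =
          G.mul (G.derivedBracket Δ i x y) z
            + ((-1 : k) ^ (j * (i + 1))) • G.mul y (G.derivedBracket Δ i x z) := by
  have hne : (-1 : k) ≠ 0 := neg_ne_zero.mpr one_ne_zero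
  have esq : ∀ n : ℤ, ((-1 : k) ^ n) * ((-1 : k) ^ n) = 1 := fun n => by
    rw [← zpow_add₀ hne]; exact Even.neg_one_zpow ⟨n, rfl⟩
  have s1 : ∀ i j : ℤ, ((-1 : k) ^ ((i + 1) * j)) = (-1 : k) ^ (i * j) * (-1 : k) ^ j :=
    fun i j => by rw [show (i + 1) * j = i * j + j by ring, zpow_add₀ hne]
  have s2 : ∀ i j : ℤ, ((-1 : k) ^ (j * (i + 1))) = (-1 : k) ^ (i * j) * (-1 : k) ^ j :=
    fun i j => by rw [show j * (i + 1) = i * j + j by ring, zpow_add₀ hne]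
  constructor
  · intro h i j l x y z hx hy hz
    have hBV := h i j l x y z hx hy hz
    have sq : ∀ v : A, ((-1 : k) ^ i * (-1 : k) ^ i) • v = v := fun v => by
      rw [esq, one_smul]
    have hc1 : G.mul (Δ x) (G.mul y z)
        = ((-1 : k) ^ (i * j) * (-1 : k) ^ j) • G.mul y (G.mul (Δ x) z) := by
      rw [← G.mul_assoc, G.mul_comm (i + 1) j (Δ x) y (hΔ i x hx) hy, s1]
      simp only [map_smul, LinearMap.smul_apply, G.mul_assoc]
    have hc2 : G.mul x (G.mul y (Δ z))
        = ((-1 : k) ^ (i * j)) • G.mul y (G.mul x (Δ z)) := by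
      rw [← G.mul_assoc, G.mul_comm i j x y hx hy]
      simp only [map_smul, LinearMap.smul_apply, G.mul_assoc]
    rw [s1, zpow_add₀ hne] at hBV
    rw [s2]
    simp only [GradedCommAlgebra.derivedBracket, map_sub, map_smul, LinearMap.sub_apply,
      LinearMap.smul_apply] at hBV ⊢
    simp only [G.mul_assoc] at hBV ⊢
    simp only [hc1, hc2] at hBV ⊢
    linear_combination (norm := module) ((-1 : k) ^ i) • hBV
      + sq (G.mul x (Δ (G.mul y z))) - sq (G.mul x (G.mul (Δ y) z))
      - ((-1 : k) ^ (i * j) * (-1 : k) ^ j) • sq (G.mul y (G.mul x (Δ z)))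
  · intro h i j l x y z hx hy hz
    have hP := h i j l x y z hx hy hz
    have sq : ∀ v : A, ((-1 : k) ^ i * (-1 : k) ^ i) • v = v := fun v => by
      rw [esq, one_smul]
    have hc1 : G.mul (Δ x) (G.mul y z)
        = ((-1 : k) ^ (i * j) * (-1 : k) ^ j) • G.mul y (G.mul (Δ x) z) := by
      rw [← G.mul_assoc, G.mul_comm (i + 1) j (Δ x) y (hΔ i x hx) hy, s1]
      simp only [map_smul, LinearMap.smul_apply, G.mul_assoc]
    have hc2 : G.mul x (G.mul y (Δ z))
        = ((-1 : k) ^ (i * j)) • G.mul y (G.mul x (Δ z)) := by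
      rw [← G.mul_assoc, G.mul_comm i j x y hx hy]
      simp only [map_smul, LinearMap.smul_apply, G.mul_assoc]
    rw [s2] at hP
    rw [s1, zpow_add₀ hne]
    simp only [GradedCommAlgebra.derivedBracket, map_sub, map_smul, LinearMap.sub_apply,
      LinearMap.smul_apply] at hP ⊢
    simp only [G.mul_assoc] at hP ⊢
    simp only [hc1, hc2] at hP ⊢
    linear_combination (norm := module) ((-1 : k) ^ i) • hP
      - sq (Δ (G.mul x (G.mul y z))) + sq (G.mul (Δ (G.mul x y)) z)
      + ((-1 : k) ^ (i * j) * (-1 : k) ^ j) • sq (G.mul y (Δ (G.mul x z)))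
      - ((-1 : k) ^ (i * j) * (-1 : k) ^ j) • sq (G.mul y (G.mul (Δ x) z))
end

section
/- Let A be a graded commutative algebra over k, and let α and β be operators of degree 3 on A such that β∘α = −α∘β and β is a derivation of the product: β(x*y) = β(x)*y + (-1)^{|x|} x*β(y) for all homogeneous x, y. Let [·,·] denote the derived bracket of α, i.e. [x,y] = (-1)^{|x|} α(x*y) − (-1)^{|x|} α(x)*y − x*α(y). Then β is a derivation with respect to this bracket: for all homogeneous x, y ∈ A, β[x,y] = [β(x), y] + (-1)^{|x|+1} [x, β(y)]. -/
/-- if `α, β` are degree-3 operators with `β∘α = −α∘β` and `β` is a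
derivation of the product, then `β` is a derivation of the derived bracket of `α`:
`β[x,y] = [βx, y] + (-1)^{|x|+1} [x, βy]` on homogeneous elements.  (The bracket
`[βx, y]` carries the sign of the degree `|x| + 3` of `βx`.) -/
theorem beta_derivation_of_bracket_deg3 {k : Type} [Field k] [CharZero k]
    {A : Type} [AddCommGroup A] [Module k A]
    (G : GradedCommAlgebra k A) (α β : A →ₗ[k] A)
    (hα : G.HasDegree α 3) (hβ : G.HasDegree β 3)
    (hanti : ∀ x : A, β (α x) = - α (β x))
    (hder : ∀ (i j : ℤ) (x y : A), x ∈ G.grading i → y ∈ G.grading j →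
      β (G.mul x y) = G.mul (β x) y + ((-1 : k) ^ i) • G.mul x (β y)) :
    ∀ (i j : ℤ) (x y : A), x ∈ G.grading i → y ∈ G.grading j →
      β (G.derivedBracket α i x y) =
        G.derivedBracket α (i + 3) (β x) y
          + ((-1 : k) ^ (i + 1)) • G.derivedBracket α i x (β y) := by
  intro i j x y hx hy
  have h1 := hder i j x y hx hy
  have h2 := hder (i + 3) j (α x) y (hα i x hx) hy
  have h3 := hder i (j + 3) x (α y) hx (hα j y hy)
  have e3 : ((-1 : k) ^ (i + 3)) = -((-1 : k) ^ i) := by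
    rw [zpow_add₀ (by norm_num : (-1 : k) ≠ 0)]; norm_num
  have e1 : ((-1 : k) ^ (i + 1)) = -((-1 : k) ^ i) := by
    rw [zpow_add₀ (by norm_num : (-1 : k) ≠ 0)]; norm_num
  simp only [GradedCommAlgebra.derivedBracket, map_sub, map_smul, h2, h3,
    hanti, h1, map_add, map_neg, LinearMap.neg_apply, e3, e1]
  have sq : ((-1 : k) ^ i) * ((-1 : k) ^ i) = 1 := by
    rw [← zpow_add₀ (by norm_num : (-1 : k) ≠ 0), ← two_mul, zpow_mul]
    norm_num
  match_scalars <;> first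
    | ring1
    | linear_combination sq
    | linear_combination -sq
    | linear_combination (2 : k) * sq
    | linear_combination (-2 : k) * sq
end

section
/- Let A be a graded commutative algebra over k, let d and e be odd integers, and let α and β be operators on A of degrees d and e respectively, such that β∘α = −α∘β and β is a derivation of the product: β(x*y) = β(x)*y + (-1)^{|x|} x*β(y) for all homogeneous x, y. Let [·,·] denote the derived bracket of α. Then for all homogeneous x, y ∈ A, β[x,y] = [β(x), y] + (-1)^{|x|+1} [x, β(y)]. -/
/-- if `α, β` are operators of odd degrees `d, e` with `β∘α = −α∘β`
and `β` is a derivation of the product, then `β` is a derivation of the derived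
bracket of `α`: `β[x,y] = [βx, y] + (-1)^{|x|+1} [x, βy]` on homogeneous elements.
(The bracket `[βx, y]` carries the sign of the degree `|x| + e` of `βx`.) -/
theorem beta_derivation_of_bracket_odd {k : Type} [Field k] [CharZero k]
    {A : Type} [AddCommGroup A] [Module k A]
    (G : GradedCommAlgebra k A) (d e : ℤ) (hd : Odd d) (he : Odd e)
    (α β : A →ₗ[k] A)
    (hα : G.HasDegree α d) (hβ : G.HasDegree β e)
    (hanti : ∀ x : A, β (α x) = - α (β x))
    (hder : ∀ (i j : ℤ) (x y : A), x ∈ G.grading i → y ∈ G.grading j →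
      β (G.mul x y) = G.mul (β x) y + ((-1 : k) ^ i) • G.mul x (β y)) :
    ∀ (i j : ℤ) (x y : A), x ∈ G.grading i → y ∈ G.grading j →
      β (G.derivedBracket α i x y) =
        G.derivedBracket α (i + e) (β x) y
          + ((-1 : k) ^ (i + 1)) • G.derivedBracket α i x (β y) := by
  intro i j x y hx hy
  have hne : (-1 : k) ≠ 0 := by norm_num
  have he' : ((-1 : k) ^ e) = -1 := he.neg_one_zpow
  have hd' : ((-1 : k) ^ d) = -1 := hd.neg_one_zpow
  have e1 : ((-1 : k) ^ (i + e)) = -((-1 : k) ^ i) := by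
    rw [zpow_add₀ hne, he', mul_neg_one]
  have e2 : ((-1 : k) ^ (i + d)) = -((-1 : k) ^ i) := by
    rw [zpow_add₀ hne, hd', mul_neg_one]
  have e3 : ((-1 : k) ^ (i + 1)) = -((-1 : k) ^ i) := by
    rw [zpow_add₀ hne, zpow_one, mul_neg_one]
  have h1 : β (α (G.mul x y)) =
      - α (G.mul (β x) y) - ((-1 : k) ^ i) • α (G.mul x (β y)) := by
    rw [hanti, hder i j x y hx hy, map_add, map_smul]
    abel
  have h2 : β (G.mul (α x) y) =
      - G.mul (α (β x)) y + ((-1 : k) ^ (i + d)) • G.mul (α x) (β y) := by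
    rw [hder (i + d) j (α x) y (hα i x hx) hy, hanti, map_neg, LinearMap.neg_apply]
  have h3 : β (G.mul x (α y)) =
      G.mul (β x) (α y) - ((-1 : k) ^ i) • G.mul x (α (β y)) := by
    rw [hder i (j + d) x (α y) hx (hα j y hy), hanti, map_neg, smul_neg]
    abel
  simp only [GradedCommAlgebra.derivedBracket, map_sub, map_smul, h1, h2, h3, e1, e2, e3,
    smul_add, smul_sub, smul_neg, smul_smul, neg_smul, neg_neg]
  module
end

section
/- Let d be an odd integer, let A be a graded commutative algebra over k, and let Δ be an operator of degree d on A with Δ∘Δ = 0, with derived bracket [·,·]. Then the BV-axiom holds for all homogeneous x, y, z ∈ A if and only if the degree-d Poisson relation [x, y*z] = [x,y]*z + (-1)^{|y|(|x|+d)} y*[x,z] holds for all homogeneous x, y, z ∈ A. (This is the algebraic content of the identification of algebras over the homology of the framed little 2n-discs operad, where d = 2n−1.) -/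
/-- for an operator `Δ` of odd degree `d` with `Δ ∘ Δ = 0`, the BV-axiom
holds on homogeneous elements iff the derived bracket satisfies the degree-`d`
Poisson relation `[x, y*z] = [x,y]*z + (-1)^{|y|(|x|+d)} y*[x,z]`. -/
theorem bvAxiom_iff_poisson_odd {k : Type} [Field k] [CharZero k]
    {A : Type} [AddCommGroup A] [Module k A]
    (G : GradedCommAlgebra k A) (d : ℤ) (hd : Odd d) (Δ : A →ₗ[k] A)
    (hΔ : G.HasDegree Δ d) (hΔ2 : ∀ x : A, Δ (Δ x) = 0) :
    G.BVAxiom Δ ↔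
      ∀ (i j l : ℤ) (x y z : A), x ∈ G.grading i → y ∈ G.grading j → z ∈ G.grading l →
        G.derivedBracket Δ i x (G.mul y z) =
          G.mul (G.derivedBracket Δ i x y) z
            + ((-1 : k) ^ (j * (i + d))) • G.mul y (G.derivedBracket Δ i x z) := by
  have key2 : ∀ (i j : ℤ) (x y z : A), x ∈ G.grading i → y ∈ G.grading j →
      G.mul (G.mul x y) z = ((-1 : k) ^ (i * j)) • G.mul y (G.mul x z) := by
    intro i j x y z hx hy
    rw [G.mul_comm i j x y hx hy]
    simp only [map_smul, LinearMap.smul_apply, G.mul_assoc]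
  have main : ∀ (i j l : ℤ) (x y z : A), x ∈ G.grading i → y ∈ G.grading j → z ∈ G.grading l →
      ((Δ (G.mul (G.mul x y) z) =
          G.mul (Δ (G.mul x y)) z
            + ((-1 : k) ^ i) • G.mul x (Δ (G.mul y z))
            + ((-1 : k) ^ ((i + 1) * j)) • G.mul y (Δ (G.mul x z))
            - G.mul (G.mul (Δ x) y) z
            - ((-1 : k) ^ i) • G.mul (G.mul x (Δ y)) z
            - ((-1 : k) ^ (i + j)) • G.mul (G.mul x y) (Δ z)) ↔
        (G.derivedBracket Δ i x (G.mul y z) =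
          G.mul (G.derivedBracket Δ i x y) z
            + ((-1 : k) ^ (j * (i + d))) • G.mul y (G.derivedBracket Δ i x z))) := by
    intro i j l x y z hx hy hz
    unfold GradedCommAlgebra.derivedBracket
    rw [← G.mul_assoc x y z, ← G.mul_assoc (Δ x) y z]
    simp only [map_sub, map_smul, LinearMap.sub_apply, LinearMap.smul_apply]
    rw [key2 (i + d) j (Δ x) y z (hΔ i x hx) hy, key2 i j x y (Δ z) hx hy]
    rcases Int.even_or_odd i with hi | hi <;> rcases Int.even_or_odd j with hj | hj
    · rw [hi.neg_one_zpow, ((hj.mul_left (i + 1)) : Even ((i + 1) * j)).neg_one_zpow,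
        (hi.add hj).neg_one_zpow, ((hj.mul_right (i + d)) : Even (j * (i + d))).neg_one_zpow,
        ((hj.mul_left (i + d)) : Even ((i + d) * j)).neg_one_zpow,
        ((hj.mul_left i) : Even (i * j)).neg_one_zpow]
      constructor <;> intro h <;>
        first
          | linear_combination (norm := module) h
          | linear_combination (norm := module) -h
    · rw [hi.neg_one_zpow, (hi.add_one.mul hj : Odd ((i + 1) * j)).neg_one_zpow,
        (hi.add_odd hj).neg_one_zpow, (hj.mul (hi.add_odd hd) : Odd (j * (i + d))).neg_one_zpow,
        ((hi.add_odd hd).mul hj : Odd ((i + d) * j)).neg_one_zpow,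
        ((hi.mul_right j) : Even (i * j)).neg_one_zpow]
      constructor <;> intro h <;>
        first
          | linear_combination (norm := module) h
          | linear_combination (norm := module) -h
    · rw [hi.neg_one_zpow, ((hj.mul_left (i + 1)) : Even ((i + 1) * j)).neg_one_zpow,
        (hi.add_even hj).neg_one_zpow, ((hj.mul_right (i + d)) : Even (j * (i + d))).neg_one_zpow,
        ((hj.mul_left (i + d)) : Even ((i + d) * j)).neg_one_zpow,
        ((hj.mul_left i) : Even (i * j)).neg_one_zpow]
      constructor <;> intro h <;>
        first
          | linear_combination (norm := module) h
          | linear_combination (norm := module) -h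
    · rw [hi.neg_one_zpow, ((hi.add_one.mul_right j) : Even ((i + 1) * j)).neg_one_zpow,
        (hi.add_odd hj).neg_one_zpow,
        (((hi.add_odd hd).mul_left j) : Even (j * (i + d))).neg_one_zpow,
        (((hi.add_odd hd).mul_right j) : Even ((i + d) * j)).neg_one_zpow,
        (hi.mul hj : Odd (i * j)).neg_one_zpow]
      constructor <;> intro h <;>
        first
          | linear_combination (norm := module) h
          | linear_combination (norm := module) -h
  constructor
  · intro h i j l x y z hx hy hz
    exact (main i j l x y z hx hy hz).mp (h i j l x y z hx hy hz)
  · intro h i j l x y z hx hy hz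
    exact (main i j l x y z hx hy hz).mpr (h i j l x y z hx hy hz)
end

section
/- Let d be an odd integer, let A be a graded commutative algebra over k, and let Δ be an operator of degree d on A with Δ∘Δ = 0 satisfying the BV-axiom, with derived bracket [·,·]. Then the derived bracket satisfies the graded Jacobi identity of a (d+1)-algebra: for all homogeneous x, y, z ∈ A, [x,[y,z]] = [[x,y],z] + (-1)^{(|x|+d)(|y|+d)} [y,[x,z]]. -/
lemma neg_one_zpow_ite {k : Type} [Field k] (e : ℤ) :
    (-1:k)^e = if Even e then 1 else -1 := by
  rcases Int.even_or_odd e with h | h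
  · simp [h, Even.neg_one_zpow]
  · simp [Int.not_even_iff_odd.mpr h, h.neg_one_zpow]

/-- for an operator `Δ` of odd degree `d` with `Δ ∘ Δ = 0` satisfying
the BV-axiom, the derived bracket satisfies the graded Jacobi identity of a
`(d+1)`-algebra: `[x,[y,z]] = [[x,y],z] + (-1)^{(|x|+d)(|y|+d)} [y,[x,z]]`
on homogeneous elements. -/
theorem derivedBracket_jacobi_odd {k : Type} [Field k] [CharZero k]
    {A : Type} [AddCommGroup A] [Module k A]
    (G : GradedCommAlgebra k A) (d : ℤ) (hd : Odd d) (Δ : A →ₗ[k] A)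
    (hΔ : G.HasDegree Δ d) (hΔ2 : ∀ x : A, Δ (Δ x) = 0) (hBV : G.BVAxiom Δ) :
    ∀ (i j l : ℤ) (x y z : A), x ∈ G.grading i → y ∈ G.grading j → z ∈ G.grading l →
      G.derivedBracket Δ i x (G.derivedBracket Δ j y z) =
        G.derivedBracket Δ (i + j + d) (G.derivedBracket Δ i x y) z
          + ((-1 : k) ^ ((i + d) * (j + d))) •
              G.derivedBracket Δ j y (G.derivedBracket Δ i x z) := by
  
  intro i j l x y z hx hy hz
  have hΔx := hΔ i x hx
  have hΔy := hΔ j y hy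
  have hΔz := hΔ l z hz
  have h1 := hBV i (j+d) l x (Δ y) z hx hΔy hz
  have h2 := hBV i j (l+d) x y (Δ z) hx hy hΔz
  have h3 := hBV (i+d) j l (Δ x) y z hΔx hy hz
  have h4 := hBV j (i+d) l y (Δ x) z hy hΔx hz
  have h5 := hBV j i (l+d) y x (Δ z) hy hx hΔz
  have h0 := congrArg Δ (hBV i j l x y z hx hy hz)
  have c1 := G.mul_comm (j+d) (i+d) (Δ y) (Δ x) hΔy hΔx
  have c2 := G.mul_comm j (i+d) y (Δ x) hy hΔx
  have c3 := G.mul_comm (j+d) i (Δ y) x hΔy hx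
  have c4 := G.mul_comm j i y x hy hx
  simp only [map_add, map_sub, map_smul, hΔ2, map_zero, LinearMap.zero_apply,
    smul_zero, zero_sub, sub_zero, zero_add, add_zero] at h0
  simp only [GradedCommAlgebra.derivedBracket, map_sub, map_smul, map_add, map_neg,
    LinearMap.sub_apply, LinearMap.smul_apply, LinearMap.add_apply, LinearMap.neg_apply,
    smul_sub, smul_add, smul_neg, smul_smul, hΔ2, map_zero, LinearMap.zero_apply, smul_zero,
    zero_sub, sub_zero, zero_add, add_zero, ← G.mul_assoc]
  rw [h1, h2, h3, h4, h5]
  rw [h1, h2, h3] at h0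
  simp only [map_add, map_sub, map_smul, map_neg, LinearMap.sub_apply, LinearMap.smul_apply,
    LinearMap.add_apply, LinearMap.neg_apply, smul_sub, smul_add, smul_neg, smul_smul, hΔ2,
    map_zero, LinearMap.zero_apply, smul_zero, zero_sub, sub_zero, zero_add, add_zero,
    ← G.mul_assoc] at h0 ⊢
  rw [c1, c2, c3, c4]
  simp only [map_smul, LinearMap.smul_apply, smul_sub, smul_add, smul_smul]
  rw [← sub_eq_zero]
  have h0' := congrArg (fun t : A => ((-1:k)^j) • t) h0
  simp only [smul_zero] at h0'
  rw [h0']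
  match_scalars <;>
  · simp only [neg_one_zpow_ite]
    rcases Int.even_or_odd i with hi | hi <;>
    rcases Int.even_or_odd j with hj | hj <;>
    rcases Int.even_or_odd l with hl | hl <;>
    simp [Int.even_mul, Int.even_add, Int.even_sub, Int.even_add_one, hi, hj, hl,
      Int.not_even_iff_odd.mpr, Int.not_even_iff_odd.mpr hd, parity_simps]
end
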